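/- Let i ∈ N be a buyer and ξ ∈ ℝ_{≥0}^{E_i} with ξ(E_i) ≤ d_i. Then for every Y ⊆ N−i, min_{F ⊆ E_i} ( f_{w,d}(E_Y ∪ F) − ξ(F) ) = min_{Z ⊆ Y, F ⊆ E_i} ( f_w(E_Z ∪ F) + d(Y \ Z) − ξ(F) ). -/

import Mathlib

open Finset

noncomputable section

namespace TwoSidedMarket

variable {B S : Type*} [Fintype B] [Fintype S] [DecidableEq B] [DecidableEq S]

/-- A function `f` on subsets of a ground set `G` is monotone submodular:
`f ∅ = 0`, monotone on subsets of `G`, and submodular on subsets of `G`. -/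
def IsMonoSubmodular {α : Type*} [DecidableEq α] (G : Finset α) (f : Finset α → ℝ) : Prop :=
  f ∅ = 0 ∧ (∀ A B : Finset α, A ⊆ B → B ⊆ G → f A ≤ f B) ∧
    ∀ A B : Finset α, A ⊆ G → B ⊆ G → f (A ∩ B) + f (A ∪ B) ≤ f A + f B

/-- Monotone submodular, without the requirement of vanishing at `∅`. -/
def IsMonoSubmodularWeak {α : Type*} [DecidableEq α] (G : Finset α) (f : Finset α → ℝ) : Prop :=
  (∀ A B : Finset α, A ⊆ B → B ⊆ G → f A ≤ f B) ∧
    ∀ A B : Finset α, A ⊆ G → B ⊆ G → f (A ∩ B) + f (A ∪ B) ≤ f A + f B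

/-- `E_i`: the edges of `E` incident to buyer `i`. -/
def Ei (E : Finset (B × S)) (i : B) : Finset (B × S) := E.filter fun e => e.1 = i

/-- `E_j`: the edges of `E` incident to seller `j`. -/
def Ej (E : Finset (B × S)) (j : S) : Finset (B × S) := E.filter fun e => e.2 = j

/-- `E_X`: the edges of `E` incident to some buyer in `X`. -/
def EX (E : Finset (B × S)) (X : Finset B) : Finset (B × S) := E.filter fun e => e.1 ∈ X

/-- `N_F`: the buyers incident to some edge of `F`. -/
def NF (F : Finset (B × S)) : Finset B := F.image Prod.fst

/-- `x(F) = Σ_{e ∈ F} x e`. -/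
def vsum (x : B × S → ℝ) (F : Finset (B × S)) : ℝ := ∑ e ∈ F, x e

/-- Membership `w ∈ P = ⊕_j P_j`: `w` is nonnegative, supported on `E`, and
`w|_{E_j} ∈ P_j` for every seller `j`. -/
def memP (E : Finset (B × S)) (fj : S → Finset (B × S) → ℝ) (w : B × S → ℝ) : Prop :=
  (∀ e, 0 ≤ w e) ∧ (∀ e ∉ E, w e = 0) ∧ ∀ j : S, ∀ F ⊆ Ej E j, vsum w F ≤ fj j F

/-- `f(F) := Σ_{j ∈ M} f_j (E_j ∩ F)`. -/
def fTot (E : Finset (B × S)) (fj : S → Finset (B × S) → ℝ) (F : Finset (B × S)) : ℝ :=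
  ∑ j : S, fj j (Ej E j ∩ F)

/-- `f_w(F) := min_{F ⊆ F' ⊆ E} (f(F') - w(F'))`. -/
def fw (E : Finset (B × S)) (fj : S → Finset (B × S) → ℝ)
    (w : B × S → ℝ) (F : Finset (B × S)) : ℝ :=
  sInf {r : ℝ | ∃ F' : Finset (B × S), F ⊆ F' ∧ F' ⊆ E ∧ r = fTot E fj F' - vsum w F'}

/-- Membership in the remnant supply polytope `P_{w,d}`. -/
def memPwd (E : Finset (B × S)) (fj : S → Finset (B × S) → ℝ)
    (w : B × S → ℝ) (d : B → ℝ) (x : B × S → ℝ) : Prop :=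
  (∀ e, 0 ≤ x e) ∧ (∀ e ∉ E, x e = 0) ∧ memP E fj (w + x) ∧
    ∀ i : B, vsum x (Ei E i) ≤ d i

/-- `f_{w,d}(F) := max_{x ∈ P_{w,d}} x(F)`. -/
def fwd (E : Finset (B × S)) (fj : S → Finset (B × S) → ℝ)
    (w : B × S → ℝ) (d : B → ℝ) (F : Finset (B × S)) : ℝ :=
  sSup {r : ℝ | ∃ x : B × S → ℝ, memPwd E fj w d x ∧ r = vsum x F}

/-- `P^i_{w,d}(ξ)`: the remnant supply polytope of the buyers other than `i`,
given that buyer `i` receives `ξ`.  (Vectors indexed by `N - i` are encoded as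
functions on all of `B` vanishing at `i`.) -/
def PiWd (E : Finset (B × S)) (fj : S → Finset (B × S) → ℝ)
    (w : B × S → ℝ) (d : B → ℝ) (i : B) (ξ : B × S → ℝ) : Set (B → ℝ) :=
  {u | u i = 0 ∧ (∀ k, 0 ≤ u k) ∧
    ∃ x : B × S → ℝ, memPwd E fj w d x ∧ (∀ e ∈ Ei E i, x e = ξ e) ∧
      ∀ k : B, k ≠ i → vsum x (Ei E k) = u k}

/-- The clinching polytope `P^i_{w,d}` of buyer `i`:
all `ξ ∈ ℝ_{≥0}^{E_i}` with `P^i_{w,d}(ξ) = P^i_{w,d}(0)`. -/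
def ClinchP (E : Finset (B × S)) (fj : S → Finset (B × S) → ℝ)
    (w : B × S → ℝ) (d : B → ℝ) (i : B) : Set (B × S → ℝ) :=
  {ξ | (∀ e, 0 ≤ ξ e) ∧ (∀ e ∉ Ei E i, ξ e = 0) ∧
    PiWd E fj w d i ξ = PiWd E fj w d i 0}

/-!
For `≤`, every `x ∈ P_{w,d}` satisfies `x(E_Z ∪ F) ≤ f_w(E_Z ∪ F)` and `x(E_{Y∖Z}) ≤ d(Y ∖ Z)`.
For `≥`, `f_{w,d}(G)` is at least the min-cut value `min_K (d(K) + f_w(G ∖ E_K))`: this is the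
nontrivial half of the min–max theorem for the intersection of the polymatroid of `f_w` with the
partition constraints `x(E_k) ≤ d_k`. It is proved by induction on `G`: raise `x(e₀)` greedily
by the largest amount `a` that keeps the min-cut value of the remaining problem at least `θ - a`,
and recurse on the polymatroid contracted by `a • 𝟙_{e₀}`. A cut `K` attaining the minimum for
`G = E_Y ∪ F` then gives the pair `(Y ∖ K, F ∖ E_K)`; when `i ∈ K` the term `ξ(F) ≤ d_i` is
absorbed by `d(K)`.
-/

section Polymatroid

variable {α β : Type*} [DecidableEq β] [Fintype β] (π : α → β) (d : β → ℝ)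
  {G : Finset α} {g : Finset α → ℝ}

/-- The min-cut bound `min_K (d(K) + g(G \ π⁻¹ K))` for a vector of `P(g)` supported on `G`
whose restriction to each class `π⁻¹ k` has total at most `d k`. -/
def minCut (g : Finset α → ℝ) (G : Finset α) : ℝ :=
  (univ : Finset (Finset β)).inf' univ_nonempty fun K => ∑ k ∈ K, d k + g (G.filter (π · ∉ K))

theorem minCut_le (K : Finset β) :
    minCut π d g G ≤ ∑ k ∈ K, d k + g (G.filter (π · ∉ K)) :=
  inf'_le _ (mem_univ K)

theorem exists_minCut_eq : ∃ K, minCut π d g G = ∑ k ∈ K, d k + g (G.filter (π · ∉ K)) := by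
  obtain ⟨K, -, hK⟩ := exists_mem_eq_inf' (univ_nonempty (α := Finset β))
    fun K => ∑ k ∈ K, d k + g (G.filter (π · ∉ K))
  exact ⟨K, hK⟩

variable [DecidableEq α] {e₀ : α} {a : ℝ}

theorem IsMonoSubmodular.subset {G' : Finset α} (hg : IsMonoSubmodular G g) (h : G' ⊆ G) :
    IsMonoSubmodular G' g :=
  ⟨hg.1, fun A C hAC hC => hg.2.1 A C hAC (hC.trans h),
    fun A C hA hC => hg.2.2 A C (hA.trans h) (hC.trans h)⟩

theorem IsMonoSubmodular.nonneg (hg : IsMonoSubmodular G g) {F : Finset α} (hF : F ⊆ G) :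
    0 ≤ g F :=
  hg.1 ▸ hg.2.1 ∅ F (empty_subset F) hF

/-- The rank function of the polymatroid `{y ≥ 0 on G : y + a • 𝟙_{e₀} ∈ P(g)}`, for `e₀ ∉ G`. -/
def contract (g : Finset α → ℝ) (e₀ : α) (a : ℝ) (F : Finset α) : ℝ :=
  min (g F) (g (insert e₀ F) - a)

theorem IsMonoSubmodular.contract (hg : IsMonoSubmodular (insert e₀ G) g) (he₀ : e₀ ∉ G)
    (ha : a ≤ g {e₀}) : IsMonoSubmodular G (contract g e₀ a) := by
  have hsub : ∀ {A}, A ⊆ G → A ⊆ insert e₀ G := fun hA => hA.trans (subset_insert e₀ G)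
  have hins : ∀ {A}, A ⊆ G → insert e₀ A ⊆ insert e₀ G := insert_subset_insert e₀
  refine ⟨?_, fun A C hAC hC => ?_, fun A C hA hC => ?_⟩
  · rw [TwoSidedMarket.contract, insert_empty, hg.1]
    exact min_eq_left (by linarith)
  · exact min_le_min (hg.2.1 A C hAC (hsub hC))
      (sub_le_sub_right (hg.2.1 _ _ (insert_subset_insert e₀ hAC) (hins hC)) a)
  · have hA₀ : e₀ ∉ A := fun h => he₀ (hA h)
    have hC₀ : e₀ ∉ C := fun h => he₀ (hC h)
    have h₁ := hg.2.2 A C (hsub hA) (hsub hC)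
    have h₂ := hg.2.2 A (insert e₀ C) (hsub hA) (hins hC)
    have h₃ := hg.2.2 (insert e₀ A) C (hins hA) (hsub hC)
    have h₄ := hg.2.2 (insert e₀ A) (insert e₀ C) (hins hA) (hins hC)
    rw [inter_insert_of_notMem hA₀, union_insert] at h₂
    rw [insert_inter_of_notMem hC₀, insert_union] at h₃
    rw [← insert_inter_distrib, ← insert_union_distrib] at h₄
    simp only [TwoSidedMarket.contract]
    rcases min_cases (g A) (g (insert e₀ A) - a) with ⟨hmA, -⟩ | ⟨hmA, -⟩ <;>
    rcases min_cases (g C) (g (insert e₀ C) - a) with ⟨hmC, -⟩ | ⟨hmC, -⟩ <;>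
    rw [hmA, hmC] <;>
    linarith [min_le_left (g (A ∩ C)) (g (insert e₀ (A ∩ C)) - a),
      min_le_right (g (A ∩ C)) (g (insert e₀ (A ∩ C)) - a),
      min_le_left (g (A ∪ C)) (g (insert e₀ (A ∪ C)) - a),
      min_le_right (g (A ∪ C)) (g (insert e₀ (A ∪ C)) - a)]

theorem sum_add_single_le_of_le_contract (he₀ : e₀ ∉ G) {x : α → ℝ} (hx₀ : x e₀ = 0)
    (hx : ∀ F ⊆ G, ∑ e ∈ F, x e ≤ contract g e₀ a F) :
    ∀ F ⊆ insert e₀ G, ∑ e ∈ F, (x + Pi.single e₀ a : α → ℝ) e ≤ g F := by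
  intro F hF
  simp only [Pi.add_apply, sum_add_distrib, sum_pi_single']
  split_ifs with hF₀
  · have hFG : F.erase e₀ ⊆ G := by
      rw [← erase_insert he₀]; exact erase_subset_erase e₀ hF
    have := (hx _ hFG).trans (min_le_right _ _)
    rw [insert_erase hF₀, sum_erase F hx₀] at this
    linarith
  · rw [add_zero]
    exact (hx F ((subset_insert_iff_of_notMem hF₀).mp hF)).trans (min_le_left _ _)

theorem minCut_le_demand_add (hg : IsMonoSubmodular (insert e₀ G) g) {K : Finset β}
    (hK : π e₀ ∉ K) :
    minCut π d g (insert e₀ G) ≤ d (π e₀) + (∑ k ∈ K, d k + g (G.filter (π · ∉ K))) := by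
  have h := minCut_le π d (insert (π e₀) K) (g := g) (G := insert e₀ G)
  rw [sum_insert hK, filter_insert, if_neg (by simp)] at h
  have hmono : g (G.filter (π · ∉ insert (π e₀) K)) ≤ g (G.filter (π · ∉ K)) :=
    hg.2.1 _ _ (monotone_filter_right G fun e _ he => fun h => he (mem_insert_of_mem h))
      ((filter_subset _ _).trans (subset_insert _ _))
  linarith

theorem minCut_le_singleton_add (hg : IsMonoSubmodular (insert e₀ G) g) (he₀ : e₀ ∉ G)
    {K : Finset β} (hK : π e₀ ∉ K) :
    minCut π d g (insert e₀ G) ≤ g {e₀} + (∑ k ∈ K, d k + g (G.filter (π · ∉ K))) := by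
  have h := minCut_le π d K (g := g) (G := insert e₀ G)
  rw [filter_insert, if_pos hK] at h
  have hsub := hg.2.2 {e₀} (G.filter (π · ∉ K)) (by simp)
    ((filter_subset _ _).trans (subset_insert _ _))
  rw [singleton_inter_of_notMem fun h => he₀ (mem_of_mem_filter _ h), ← insert_eq, hg.1] at hsub
  linarith

-- Uncrossing: the intersection and union of the two cut sets are the cut sets of `K ∪ K'` and
-- `K ∩ K'`, so submodularity of `g` bounds the sum of the two cuts below by `2 θ`.
theorem two_mul_minCut_le (hg : IsMonoSubmodular (insert e₀ G) g) (he₀ : e₀ ∉ G)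
    {K K' : Finset β} (hK : π e₀ ∉ K) (hK' : π e₀ ∈ K') :
    2 * minCut π d g (insert e₀ G) ≤ (∑ k ∈ K, d k + g (G.filter (π · ∉ K))) +
      (∑ k ∈ K', d k + g (insert e₀ (G.filter (π · ∉ K')))) := by
  have hinter : insert e₀ (G.filter (π · ∉ K')) ∩ G.filter (π · ∉ K) =
      (insert e₀ G).filter (π · ∉ K ∪ K') := by
    ext e; grind
  have hunion : insert e₀ (G.filter (π · ∉ K')) ∪ G.filter (π · ∉ K) =
      (insert e₀ G).filter (π · ∉ K ∩ K') := by
    ext e; grind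
  have hsub := hg.2.2 (insert e₀ (G.filter (π · ∉ K'))) (G.filter (π · ∉ K))
    (insert_subset_insert _ (filter_subset _ _)) ((filter_subset _ _).trans (subset_insert _ _))
  rw [hinter, hunion] at hsub
  have h₁ := minCut_le π d (K ∪ K') (g := g) (G := insert e₀ G)
  have h₂ := minCut_le π d (K ∩ K') (g := g) (G := insert e₀ G)
  have hd := sum_union_inter (s₁ := K) (s₂ := K') (f := d)
  linarith

theorem exists_greedy_increment (hd : ∀ k, 0 ≤ d k) (hg : IsMonoSubmodular (insert e₀ G) g)
    (he₀ : e₀ ∉ G) :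
    ∃ a, 0 ≤ a ∧ a ≤ d (π e₀) ∧ a ≤ g {e₀} ∧
      (∀ K, π e₀ ∈ K → minCut π d g (insert e₀ G) + a ≤
        ∑ k ∈ K, d k + g (insert e₀ (G.filter (π · ∉ K)))) ∧
      (∀ K, π e₀ ∉ K → minCut π d g (insert e₀ G) ≤
        a + (∑ k ∈ K, d k + g (G.filter (π · ∉ K)))) := by
  set θ := minCut π d g (insert e₀ G)
  set slack := fun K => ∑ k ∈ K, d k + g (insert e₀ (G.filter (π · ∉ K))) - θ
  set T := (univ : Finset (Finset β)).filter (π e₀ ∈ ·)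
  have hne : T.Nonempty := ⟨univ, by simp [T]⟩
  have hslack : ∀ K, π e₀ ∈ K → 0 ≤ slack K := fun K hK => by
    have h := minCut_le π d K (g := g) (G := insert e₀ G)
    rw [filter_insert, if_neg (not_not.mpr hK)] at h
    have := hg.2.1 _ (insert e₀ (G.filter (π · ∉ K))) (subset_insert e₀ _)
      (insert_subset_insert _ (filter_subset _ _))
    simp only [slack]
    linarith
  -- The largest increment of `x e₀` allowed by the cap `d (π e₀)`, by `g {e₀}`, and by the cuts
  -- `K ∋ π e₀`, whose value in the contracted problem must stay at least `θ - a`.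
  set a := min (d (π e₀)) (min (g {e₀}) (T.inf' hne slack))
  have ha : ∀ K, π e₀ ∈ K → a ≤ slack K := fun K hK =>
    (min_le_right _ _).trans ((min_le_right _ _).trans (inf'_le slack (by simpa [T] using hK)))
  refine ⟨a, le_min (hd _) (le_min (hg.nonneg (by simp))
      (le_inf' _ _ fun K hK => hslack K (by simpa [T] using hK))),
    min_le_left _ _, (min_le_right _ _).trans (min_le_left _ _), fun K hK => ?_, fun K hK => ?_⟩
  · linarith [ha K hK]
  · have : θ - (∑ k ∈ K, d k + g (G.filter (π · ∉ K))) ≤ a :=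
      le_min (by linarith [minCut_le_demand_add π d hg hK])
        (le_min (by linarith [minCut_le_singleton_add π d hg he₀ hK])
          (le_inf' _ _ fun K' hK' => by
            have := two_mul_minCut_le π d hg he₀ hK (by simpa [T] using hK')
            simp only [slack]
            linarith))
    linarith

theorem minCut_le_add_minCut_contract
    (hin : ∀ K, π e₀ ∈ K → minCut π d g (insert e₀ G) + a ≤
      ∑ k ∈ K, d k + g (insert e₀ (G.filter (π · ∉ K))))
    (hout : ∀ K, π e₀ ∉ K → minCut π d g (insert e₀ G) ≤
      a + (∑ k ∈ K, d k + g (G.filter (π · ∉ K)))) :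
    minCut π d g (insert e₀ G) ≤ a + minCut π (d - Pi.single (π e₀) a) (contract g e₀ a) G := by
  rw [← sub_le_iff_le_add']
  refine le_inf' _ _ fun K _ => ?_
  have h := minCut_le π d K (g := g) (G := insert e₀ G)
  simp only [Pi.sub_apply, sum_sub_distrib, sum_pi_single', contract]
  by_cases hK : π e₀ ∈ K
  · rw [filter_insert, if_neg (not_not.mpr hK)] at h
    have := hin K hK
    have : minCut π d g (insert e₀ G) - ∑ k ∈ K, d k ≤
        min (g (G.filter (π · ∉ K))) (g (insert e₀ (G.filter (π · ∉ K))) - a) :=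
      le_min (by linarith) (by linarith)
    rw [if_pos hK]
    linarith
  · rw [filter_insert, if_pos hK] at h
    have := hout K hK
    have : minCut π d g (insert e₀ G) - a - ∑ k ∈ K, d k ≤
        min (g (G.filter (π · ∉ K))) (g (insert e₀ (G.filter (π · ∉ K))) - a) :=
      le_min (by linarith) (by linarith)
    rw [if_neg hK]
    linarith

theorem exists_mem_polymatroid_minCut_le (hd : ∀ k, 0 ≤ d k) (hg : IsMonoSubmodular G g) :
    ∃ x : α → ℝ, (∀ e, 0 ≤ x e) ∧ (∀ e ∉ G, x e = 0) ∧ (∀ F ⊆ G, ∑ e ∈ F, x e ≤ g F) ∧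
      (∀ k, ∑ e ∈ G with π e = k, x e ≤ d k) ∧ minCut π d g G ≤ ∑ e ∈ G, x e := by
  induction G using Finset.induction_on generalizing d g with
  | empty =>
    refine ⟨0, fun _ => le_rfl, fun _ _ => rfl, fun F hF => ?_, fun k => by simpa using hd k, ?_⟩
    · simpa [subset_empty.mp hF] using hg.1.ge
    · simpa [hg.1] using minCut_le π d ∅ (g := g) (G := ∅)
  | insert e₀ G he₀ ih =>
    obtain ⟨a, ha₀, had, hag, hin, hout⟩ := exists_greedy_increment π d hd hg he₀
    have hd' : ∀ k, 0 ≤ (d - Pi.single (π e₀) a : β → ℝ) k := fun k => by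
      rcases eq_or_ne k (π e₀) with rfl | hk
      · simpa using had
      · simpa [hk] using hd k
    obtain ⟨x, hx₀, hxG, hxg, hxd, hxθ⟩ := ih _ hd' (hg.contract he₀ hag)
    have hxe₀ : x e₀ = 0 := hxG e₀ he₀
    refine ⟨x + Pi.single e₀ a, fun e => ?_, fun e he => ?_,
      sum_add_single_le_of_le_contract he₀ hxe₀ hxg, fun k => ?_, ?_⟩
    · rcases eq_or_ne e e₀ with rfl | he
      · simpa [hxe₀] using ha₀
      · simpa [he] using hx₀ e
    · have he' : e ∉ G := fun h => he (mem_insert_of_mem h)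
      simp [hxG e he', show e ≠ e₀ from fun h => he (h ▸ mem_insert_self _ _)]
    · have := hxd k
      rw [filter_insert]
      split_ifs with hk
      · subst hk
        simp [sum_add_distrib, he₀, hxe₀] at this ⊢
        linarith
      · simpa [sum_add_distrib, he₀, Ne.symm hk] using this
    · have := minCut_le_add_minCut_contract π d hin hout
      simp [sum_add_distrib, he₀, hxe₀]
      linarith

end Polymatroid

set_option linter.unusedSectionVars false

section Market

variable {E : Finset (B × S)} {fj : S → Finset (B × S) → ℝ} {w : B × S → ℝ} {d : B → ℝ}

theorem Ei_subset (i : B) : Ei E i ⊆ E := filter_subset _ _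

theorem EX_subset (Y : Finset B) : EX E Y ⊆ E := filter_subset _ _

theorem vsum_eq_sum_Ej_inter (x : B × S → ℝ) {F : Finset (B × S)} (hF : F ⊆ E) :
    vsum x F = ∑ j : S, vsum x (Ej E j ∩ F) := by
  have h : ∀ j, Ej E j ∩ F = F.filter (·.2 = j) := fun j => by
    ext e; have := @hF e; simp only [Ej, mem_inter, mem_filter]; tauto
  simp only [vsum, h, sum_fiberwise]

theorem vsum_EX (x : B × S → ℝ) (Y : Finset B) :
    vsum x (EX E Y) = ∑ k ∈ Y, vsum x (Ei E k) := by
  have h : ∀ k ∈ Y, (EX E Y).filter (·.1 = k) = Ei E k := fun k hk => by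
    ext e; simp only [EX, Ei, mem_filter]; constructor
    · exact fun h => ⟨h.1.1, h.2⟩
    · exact fun h => ⟨⟨h.1, h.2 ▸ hk⟩, h.2⟩
  rw [vsum, ← sum_fiberwise_of_maps_to (s := EX E Y) (t := Y) (g := Prod.fst)
    (fun e he => (mem_filter.mp he).2) x]
  exact sum_congr rfl fun k hk => by rw [h k hk]; rfl

theorem vsum_le_fTot (hw : memP E fj w) {F : Finset (B × S)} (hF : F ⊆ E) :
    vsum w F ≤ fTot E fj F := by
  rw [vsum_eq_sum_Ej_inter w hF]
  exact sum_le_sum fun j _ => hw.2.2 j _ inter_subset_left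

theorem fTot_empty (hfj : ∀ j, IsMonoSubmodular (Ej E j) (fj j)) : fTot E fj ∅ = 0 := by
  simp [fTot, (hfj _).1]

theorem fTot_submodular (hfj : ∀ j, IsMonoSubmodular (Ej E j) (fj j)) (A C : Finset (B × S)) :
    fTot E fj (A ∩ C) + fTot E fj (A ∪ C) ≤ fTot E fj A + fTot E fj C := by
  simp only [fTot, ← sum_add_distrib]
  refine sum_le_sum fun j _ => ?_
  rw [inter_inter_distrib_left, inter_union_distrib_left]
  exact (hfj j).2.2 _ _ inter_subset_left inter_subset_left

theorem fTot_of_subset_Ej (hfj : ∀ j, IsMonoSubmodular (Ej E j) (fj j)) {j : S}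
    {F : Finset (B × S)} (hF : F ⊆ Ej E j) : fTot E fj F = fj j F := by
  rw [fTot, sum_eq_single j _ (by simp), inter_eq_right.mpr hF]
  intro j' _ hj'
  have : Ej E j' ∩ F = ∅ := by
    refine disjoint_iff_inter_eq_empty.mp (disjoint_left.mpr fun e he he' => hj' ?_)
    exact (mem_filter.mp he).2.symm.trans (mem_filter.mp (hF he')).2
  rw [this, (hfj j').1]

theorem fw_set_finite (F : Finset (B × S)) :
    {r : ℝ | ∃ F', F ⊆ F' ∧ F' ⊆ E ∧ r = fTot E fj F' - vsum w F'}.Finite :=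
  (E.powerset.image fun F' => fTot E fj F' - vsum w F').finite_toSet.subset
    fun r ⟨F', _, hF', hr⟩ => by simpa [hr] using ⟨F', hF', rfl⟩

theorem fw_le {F F' : Finset (B × S)} (hF : F ⊆ F') (hF' : F' ⊆ E) :
    fw E fj w F ≤ fTot E fj F' - vsum w F' :=
  csInf_le (fw_set_finite F).bddBelow ⟨F', hF, hF', rfl⟩

theorem exists_fw_eq {F : Finset (B × S)} (hF : F ⊆ E) :
    ∃ F', F ⊆ F' ∧ F' ⊆ E ∧ fw E fj w F = fTot E fj F' - vsum w F' :=
  Set.Nonempty.csInf_mem (s := {r : ℝ | ∃ F', F ⊆ F' ∧ F' ⊆ E ∧ r = fTot E fj F' - vsum w F'})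
    ⟨_, E, hF, subset_rfl, rfl⟩ (fw_set_finite F)

theorem isMonoSubmodular_fw (hfj : ∀ j, IsMonoSubmodular (Ej E j) (fj j)) (hw : memP E fj w) :
    IsMonoSubmodular E (fw E fj w) := by
  refine ⟨le_antisymm ?_ ?_, fun A C hAC hC => ?_, fun A C hA hC => ?_⟩
  · simpa [fTot_empty hfj, vsum] using fw_le (fj := fj) (w := w) subset_rfl (empty_subset E)
  · obtain ⟨F', -, hF', h⟩ := exists_fw_eq (fj := fj) (w := w) (empty_subset E)
    linarith [vsum_le_fTot hw hF']
  · obtain ⟨F', hCF', hF', h⟩ := exists_fw_eq (fj := fj) (w := w) hC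
    exact h ▸ fw_le (hAC.trans hCF') hF'
  · obtain ⟨FA, hAFA, hFA, hA'⟩ := exists_fw_eq (fj := fj) (w := w) hA
    obtain ⟨FC, hCFC, hFC, hC'⟩ := exists_fw_eq (fj := fj) (w := w) hC
    have hinter := fw_le (fj := fj) (w := w) (inter_subset_inter hAFA hCFC)
      (inter_subset_left.trans hFA)
    have hunion := fw_le (fj := fj) (w := w) (union_subset_union hAFA hCFC) (union_subset hFA hFC)
    have hmod := sum_union_inter (s₁ := FA) (s₂ := FC) (f := w)
    have hsub := fTot_submodular hfj FA FC
    simp only [vsum] at *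
    linarith

theorem memPwd_zero (hw : memP E fj w) (hd : ∀ k, 0 ≤ d k) : memPwd E fj w d 0 :=
  ⟨fun _ => le_rfl, fun _ _ => rfl, by simpa using hw, fun k => by simpa [vsum] using hd k⟩

theorem vsum_le_fw_of_memPwd {x : B × S → ℝ} (hx : memPwd E fj w d x) {H : Finset (B × S)}
    (hH : H ⊆ E) : vsum x H ≤ fw E fj w H := by
  obtain ⟨F', hHF', hF', h⟩ := exists_fw_eq (fj := fj) (w := w) hH
  have hxF' : vsum x H ≤ vsum x F' := sum_le_sum_of_subset_of_nonneg hHF' fun e _ _ => hx.1 e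
  have hwx := vsum_le_fTot hx.2.2.1 hF'
  rw [h]
  simp only [vsum, Pi.add_apply, sum_add_distrib] at hwx hxF' ⊢
  linarith

theorem memPwd_of_le_fw (hfj : ∀ j, IsMonoSubmodular (Ej E j) (fj j)) (hw : memP E fj w)
    {G : Finset (B × S)} (hGE : G ⊆ E) {x : B × S → ℝ} (hx₀ : ∀ e, 0 ≤ x e)
    (hxG : ∀ e ∉ G, x e = 0) (hxf : ∀ F ⊆ G, vsum x F ≤ fw E fj w F)
    (hxd : ∀ k, ∑ e ∈ G with e.1 = k, x e ≤ d k) : memPwd E fj w d x := by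
  have hxE : ∀ e ∉ E, x e = 0 := fun e he => hxG e fun h => he (hGE h)
  have hrestrict : ∀ F, vsum x F = vsum x (F ∩ G) := fun F =>
    (sum_subset inter_subset_left fun e he he' => hxG e fun h => he' (mem_inter.mpr ⟨he, h⟩)).symm
  refine ⟨hx₀, hxE, ⟨fun e => add_nonneg (hw.1 e) (hx₀ e),
    fun e he => by simp [hw.2.1 e he, hxE e he], fun j F hF => ?_⟩, fun k => ?_⟩
  · have hFE : F ⊆ E := hF.trans (filter_subset _ _)
    have h₁ := hxf _ (inter_subset_right (s₁ := F))
    have h₂ := (isMonoSubmodular_fw hfj hw).2.1 _ _ (inter_subset_left (s₂ := G)) hFE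
    have h₃ := fw_le (fj := fj) (w := w) subset_rfl hFE
    rw [fTot_of_subset_Ej hfj hF] at h₃
    simp only [vsum, Pi.add_apply, sum_add_distrib] at *
    rw [hrestrict F] at *
    linarith
  · rw [hrestrict, Ei, filter_inter, inter_eq_right.mpr hGE]
    exact hxd k

theorem fwd_le_fw_add_sum (hw : memP E fj w) (hd : ∀ k, 0 ≤ d k) {F : Finset (B × S)}
    (hF : F ⊆ E) (Y Z : Finset B) :
    fwd E fj w d (EX E Y ∪ F) ≤ fw E fj w (EX E Z ∪ F) + ∑ k ∈ Y \ Z, d k := by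
  refine csSup_le ⟨_, 0, memPwd_zero hw hd, rfl⟩ ?_
  rintro r ⟨x, hx, rfl⟩
  have hcover : EX E Y ∪ F ⊆ (EX E Z ∪ F) ∪ EX E (Y \ Z) := by
    intro e; simp only [EX, mem_union, mem_filter, mem_sdiff]; tauto
  have hsub := sum_le_sum_of_subset_of_nonneg hcover fun e _ _ => hx.1 e
  have hunion := sum_union_inter (s₁ := EX E Z ∪ F) (s₂ := EX E (Y \ Z)) (f := x)
  have hinter : 0 ≤ vsum x ((EX E Z ∪ F) ∩ EX E (Y \ Z)) := sum_nonneg fun e _ => hx.1 e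
  have hZ := vsum_le_fw_of_memPwd hx (union_subset (EX_subset Z) hF) (H := EX E Z ∪ F)
  have hYZ : vsum x (EX E (Y \ Z)) ≤ ∑ k ∈ Y \ Z, d k := by
    rw [vsum_EX]; exact sum_le_sum fun k _ => hx.2.2.2 k
  simp only [vsum] at *
  linarith

theorem minCut_le_fwd (hfj : ∀ j, IsMonoSubmodular (Ej E j) (fj j)) (hw : memP E fj w)
    (hd : ∀ k, 0 ≤ d k) {G : Finset (B × S)} (hGE : G ⊆ E) :
    minCut Prod.fst d (fw E fj w) G ≤ fwd E fj w d G := by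
  obtain ⟨x, hx₀, hxG, hxf, hxd, hxθ⟩ :=
    exists_mem_polymatroid_minCut_le Prod.fst d hd ((isMonoSubmodular_fw hfj hw).subset hGE)
  have hx := memPwd_of_le_fw hfj hw hGE hx₀ hxG hxf hxd
  exact hxθ.trans (le_csSup ⟨fw E fj w G, fun r ⟨y, hy, hr⟩ => hr ▸ vsum_le_fw_of_memPwd hy hGE⟩
    ⟨x, hx, rfl⟩)

theorem sum_inter_sub_vsum_filter_le (hd : ∀ k, 0 ≤ d k) {i : B} {ξ : B × S → ℝ}
    (hξ0 : ∀ e, 0 ≤ ξ e) (hξd : vsum ξ (Ei E i) ≤ d i) {F : Finset (B × S)} (hF : F ⊆ Ei E i)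
    {Y : Finset B} (hiY : i ∉ Y) (K : Finset B) :
    ∑ k ∈ Y ∩ K, d k - vsum ξ (F.filter (·.1 ∉ K)) ≤ ∑ k ∈ K, d k - vsum ξ F := by
  have hFi : ∀ e ∈ F, e.1 = i := fun e he => (mem_filter.mp (hF he)).2
  by_cases hiK : i ∈ K
  · have hempty : F.filter (·.1 ∉ K) = ∅ :=
      filter_false_of_mem fun e he => not_not.mpr (hFi e he ▸ hiK)
    have hξF : vsum ξ F ≤ d i :=
      (sum_le_sum_of_subset_of_nonneg hF fun e _ _ => hξ0 e).trans hξd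
    have hins : ∑ k ∈ insert i (Y ∩ K), d k ≤ ∑ k ∈ K, d k :=
      sum_le_sum_of_subset_of_nonneg (insert_subset hiK inter_subset_right) fun k _ _ => hd k
    rw [sum_insert fun h => hiY (mem_inter.mp h).1] at hins
    simp only [hempty, vsum, sum_empty] at hξF ⊢
    linarith
  · rw [filter_true_of_mem fun e he => hFi e he ▸ hiK]
    linarith [sum_le_sum_of_subset_of_nonneg (inter_subset_right (s₁ := Y) (s₂ := K))
      fun k _ _ => hd k]

end Market

/-- for `Y ⊆ N - i`,
`min_{F ⊆ E_i} (f_{w,d}(E_Y ∪ F) - ξ(F)) =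
  min_{Z ⊆ Y, F ⊆ E_i} (f_w(E_Z ∪ F) + d(Y \ Z) - ξ(F))`. -/
theorem h_xi_eq_tilde_h_xi
    (E : Finset (B × S)) (fj : S → Finset (B × S) → ℝ)
    (hfj : ∀ j : S, IsMonoSubmodular (Ej E j) (fj j))
    (w : B × S → ℝ) (hw : memP E fj w)
    (d : B → ℝ) (hd : ∀ i : B, 0 ≤ d i)
    (i : B) (ξ : B × S → ℝ) (hξ0 : ∀ e, 0 ≤ ξ e)
    (hξd : vsum ξ (Ei E i) ≤ d i)
    (Y : Finset B) (hY : Y ⊆ Finset.univ.erase i) :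
    (Ei E i).powerset.inf' ⟨∅, Finset.empty_mem_powerset _⟩
      (fun F => fwd E fj w d (EX E Y ∪ F) - vsum ξ F) =
    (Y.powerset ×ˢ (Ei E i).powerset).inf' ⟨(∅, ∅), by simp⟩
      (fun p => fw E fj w (EX E p.1 ∪ p.2) + ∑ k ∈ Y \ p.1, d k - vsum ξ p.2) := by
  refine le_antisymm (le_inf' _ _ fun ⟨Z, F⟩ hZF => ?_) (le_inf' _ _ fun F hF => ?_)
  · rw [mem_product, mem_powerset, mem_powerset] at hZF
    have := inf'_le (fun F => fwd E fj w d (EX E Y ∪ F) - vsum ξ F) (mem_powerset.mpr hZF.2)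
    linarith [fwd_le_fw_add_sum hw hd (hZF.2.trans (Ei_subset i)) Y Z]
  · rw [mem_powerset] at hF
    set G := EX E Y ∪ F
    obtain ⟨K, hK⟩ := exists_minCut_eq Prod.fst d (g := fw E fj w) (G := G)
    have hθ := minCut_le_fwd hfj hw hd (union_subset (EX_subset Y) (hF.trans (Ei_subset i)))
    have hcut : G.filter (fun e : B × S => e.1 ∉ K) = EX E (Y \ K) ∪ F.filter (·.1 ∉ K) := by
      ext e; simp only [G, EX, mem_union, mem_filter, mem_sdiff]; tauto
    have hmem : (Y \ K, F.filter (·.1 ∉ K)) ∈ Y.powerset ×ˢ (Ei E i).powerset :=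
      mem_product.mpr ⟨mem_powerset.mpr sdiff_subset,
        mem_powerset.mpr ((filter_subset _ _).trans hF)⟩
    have := inf'_le (fun p => fw E fj w (EX E p.1 ∪ p.2) + ∑ k ∈ Y \ p.1, d k - vsum ξ p.2) hmem
    rw [hK, hcut] at hθ
    simp only [sdiff_sdiff_self_left] at this
    linarith [sum_inter_sub_vsum_filter_le hd hξ0 hξd hF (fun h => by simpa using hY h) K]

end TwoSidedMarket
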